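/- arXiv:1407.2490 — 4 statements merged into one kernel-verified Lean document; each statement's English description precedes it below -/
import Mathlib

section
/- Given positive semidefinite R ∈ ℂ^{M×M} and a vector σ ∈ ℝ^M with strictly positive entries, for any y ∈ ℂ^M in the range of R + diag(σ): y^H (R + diag(σ))^{-1} y = min over z ∈ ℂ^M of [ z^H R⁺ z + (y−z)^H diag(σ)^{-1} (y−z) ], where the minimum over z is restricted to z in the range of R. -/
/-!
Write `y = (R + D) w` with `D = diag σ`; then `yᴴ (R + D)⁻¹ y = wᴴ (R + D) w`. Every `z` in the
range of `R` is `R (w + a)`, and completing the square gives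
`zᴴ R⁺ z + (y - z)ᴴ D⁻¹ (y - z) = wᴴ (R + D) w + aᴴ R a + (R a)ᴴ D⁻¹ (R a)`,
where the last two terms are nonnegative and vanish at `a = 0`. Of the pseudoinverse only
`R R⁺ R = R` is used.
-/

open Matrix ComplexOrder Classical

/-- Moore–Penrose pseudoinverse, defined via the Penrose conditions. -/
noncomputable def pinv {n : Type*} [Fintype n] [DecidableEq n] (A : Matrix n n ℂ) :
    Matrix n n ℂ :=
  if h : ∃ B : Matrix n n ℂ,
      A * B * A = A ∧ B * A * B = B ∧ (A * B)ᴴ = A * B ∧ (B * A)ᴴ = B * A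
  then h.choose else 0

/-- The witness is `cfc (·⁻¹) a`: since `0⁻¹ = 0` in `ℝ`, it inverts `a` only on the nonzero
part of its spectrum. -/
theorem IsSelfAdjoint.exists_penrose {A : Type*} [Ring A] [StarRing A] [Algebra ℝ A]
    [TopologicalSpace A] [ContinuousFunctionalCalculus ℝ A IsSelfAdjoint] {a : A}
    (ha : IsSelfAdjoint a) (hfin : (spectrum ℝ a).Finite) :
    ∃ b : A, a * b * a = a ∧ b * a * b = b ∧ IsSelfAdjoint (a * b) ∧ IsSelfAdjoint (b * a) := by
  have hmul (f g : ℝ → ℝ) : cfc f a * cfc g a = cfc (fun x => f x * g x) a :=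
    (cfc_mul f g a (hfin.continuousOn f) (hfin.continuousOn g)).symm
  set b := cfc (·⁻¹ : ℝ → ℝ) a
  have hab : a * b = cfc (fun x : ℝ => x * x⁻¹) a := by rw [← hmul, cfc_id' ℝ a]
  have hba : b * a = cfc (fun x : ℝ => x⁻¹ * x) a := by rw [← hmul, cfc_id' ℝ a]
  refine ⟨b, ?_, ?_, hab ▸ cfc_predicate _ a, hba ▸ cfc_predicate _ a⟩
  · calc a * b * a = cfc (fun x : ℝ => x * x⁻¹) a * cfc (fun x : ℝ => x) a := by
          rw [hab, cfc_id' ℝ a]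
      _ = cfc (fun x : ℝ => x) a := by
          rw [hmul]
          exact cfc_congr fun x _ => mul_inv_mul_cancel x
      _ = a := cfc_id' ℝ a
  · calc b * a * b = cfc (fun x : ℝ => x⁻¹ * x * x⁻¹) a := by rw [hba, hmul]
      _ = b := cfc_congr fun x _ => by simpa only [inv_inv] using mul_inv_mul_cancel x⁻¹

theorem Matrix.IsHermitian.mul_pinv_mul_self {n : Type*} [Fintype n] [DecidableEq n]
    {A : Matrix n n ℂ} (hA : A.IsHermitian) : A * pinv A * A = A := by
  have h : ∃ B : Matrix n n ℂ,
      A * B * A = A ∧ B * A * B = B ∧ (A * B)ᴴ = A * B ∧ (B * A)ᴴ = B * A :=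
    hA.isSelfAdjoint.exists_penrose A.finite_real_spectrum
  rw [pinv, dif_pos h]
  exact h.choose_spec.1

section QuadraticForms

variable {α n : Type*} [CommRing α] [StarRing α] [Fintype n]

theorem Matrix.IsHermitian.star_mulVec_dotProduct {A : Matrix n n α} (hA : A.IsHermitian)
    (v u : n → α) : star (A *ᵥ v) ⬝ᵥ u = star v ⬝ᵥ (A *ᵥ u) := by
  rw [star_mulVec, ← dotProduct_mulVec, hA.eq]

theorem Matrix.IsHermitian.star_mulVec_dotProduct_mulVec_mulVec {A G : Matrix n n α}
    (hA : A.IsHermitian) (hG : A * G * A = A) (v : n → α) :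
    star (A *ᵥ v) ⬝ᵥ (G *ᵥ (A *ᵥ v)) = star v ⬝ᵥ (A *ᵥ v) := by
  rw [hA.star_mulVec_dotProduct, mulVec_mulVec, mulVec_mulVec, hG]

theorem Matrix.IsHermitian.star_mulVec_dotProduct_inv_mulVec [DecidableEq n] {S : Matrix n n α}
    (hS : S.IsHermitian) (hdet : IsUnit S.det) (w : n → α) :
    star (S *ᵥ w) ⬝ᵥ (S⁻¹ *ᵥ (S *ᵥ w)) = star w ⬝ᵥ (S *ᵥ w) :=
  hS.star_mulVec_dotProduct_mulVec_mulVec (by rw [mul_nonsing_inv _ hdet, one_mul]) w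

def splitCost (G E : Matrix n n α) (y z : n → α) : α :=
  star z ⬝ᵥ (G *ᵥ z) + star (y - z) ⬝ᵥ (E *ᵥ (y - z))

theorem splitCost_mulVec_add [DecidableEq n] {R D G : Matrix n n α} (hR : R.IsHermitian)
    (hD : D.IsHermitian) (hDdet : IsUnit D.det) (hG : R * G * R = R) (w a : n → α) :
    splitCost G D⁻¹ ((R + D) *ᵥ w) (R *ᵥ (w + a)) =
      star w ⬝ᵥ ((R + D) *ᵥ w) + star a ⬝ᵥ (R *ᵥ a) + star (R *ᵥ a) ⬝ᵥ (D⁻¹ *ᵥ (R *ᵥ a)) := by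
  have hyz : (R + D) *ᵥ w - R *ᵥ (w + a) = D *ᵥ w - R *ᵥ a := by
    rw [add_mulVec, mulVec_add]
    abel
  have hDD (v : n → α) : D *ᵥ (D⁻¹ *ᵥ v) = v := by
    rw [mulVec_mulVec, mul_nonsing_inv _ hDdet, one_mulVec]
  have hDD' (v : n → α) : D⁻¹ *ᵥ (D *ᵥ v) = v := by
    rw [mulVec_mulVec, nonsing_inv_mul _ hDdet, one_mulVec]
  rw [splitCost, hR.star_mulVec_dotProduct_mulVec_mulVec hG, hyz]
  simp only [star_add, star_sub, add_dotProduct, dotProduct_add, sub_dotProduct, dotProduct_sub,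
    mulVec_add, mulVec_sub, add_mulVec, hDD, hDD', hD.star_mulVec_dotProduct,
    hR.star_mulVec_dotProduct]
  ring

end QuadraticForms

/-- For `R ⪰ 0` and `σ ≻ 0`,
`yᴴ (R + diag σ)⁻¹ y = min_{z ∈ range R} zᴴ R⁺ z + (y−z)ᴴ diag(σ)⁻¹ (y−z)`. -/
theorem quadform_inv_add_diag_eq_min {M : ℕ}
    (R : Matrix (Fin M) (Fin M) ℂ) (hR : R.PosSemidef)
    (σ : Fin M → ℝ) (hσ : ∀ i, 0 < σ i) (y : Fin M → ℂ)
    (hy : ∃ w, (R + Matrix.diagonal fun i => (σ i : ℂ)).mulVec w = y) :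
    IsLeast {t : ℝ | ∃ z : Fin M → ℂ, (∃ w, R.mulVec w = z) ∧
        t = (star z ⬝ᵥ (pinv R).mulVec z).re +
          (star (y - z) ⬝ᵥ (Matrix.diagonal fun i => (σ i : ℂ))⁻¹.mulVec (y - z)).re}
      ((star y ⬝ᵥ (R + Matrix.diagonal fun i => (σ i : ℂ))⁻¹.mulVec y).re) := by
  obtain ⟨w, rfl⟩ := hy
  set D : Matrix (Fin M) (Fin M) ℂ := diagonal fun i => (σ i : ℂ)
  have hD : D.PosDef := posDef_diagonal_iff.2 fun i => by exact_mod_cast hσ i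
  have hRD : (R + D).PosDef := hD.posSemidef_add hR
  have hsplit := splitCost_mulVec_add hR.1 hD.1 ((isUnit_iff_isUnit_det D).1 hD.isUnit)
    hR.1.mul_pinv_mul_self w
  rw [hRD.1.star_mulVec_dotProduct_inv_mulVec ((isUnit_iff_isUnit_det _).1 hRD.isUnit)]
  simp only [← Complex.add_re]
  refine ⟨⟨R *ᵥ (w + 0), ⟨w + 0, rfl⟩, ?_⟩, ?_⟩
  · rw [← splitCost, hsplit]
    simp
  · rintro t ⟨_, ⟨u, rfl⟩, rfl⟩
    obtain ⟨a, rfl⟩ : ∃ a, u = w + a := ⟨u - w, (add_sub_cancel w u).symm⟩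
    rw [← splitCost, hsplit, Complex.add_re, Complex.add_re]
    have hRa := hR.re_dotProduct_nonneg a
    have hDRa := hD.inv.posSemidef.re_dotProduct_nonneg (R *ᵥ a)
    rw [RCLike.re_to_complex] at hRa hDRa
    linarith
end

section
/- Let R = A A^H be positive semidefinite with A ∈ ℂ^{M×r}, and let Ω ⊆ {1,…,M} be an index set. Then the minimum over the unobserved entries y_{Ω̄} of the extended quadratic form y^H R⁺ y (restricted to y in the range of R and with y_Ω fixed) equals y_Ω^H R_Ω⁺ y_Ω, where R_Ω = A_Ω A_Ω^H is the principal submatrix of R on the rows and columns in Ω. -/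
open Matrix ComplexOrder Classical

set_option linter.unusedSectionVars false
variable {n : Type*} [Fintype n] [DecidableEq n]

def IsPenrose (A B : Matrix n n ℂ) : Prop :=
  A * B * A = A ∧ B * A * B = B ∧ (A * B)ᴴ = A * B ∧ (B * A)ᴴ = B * A

lemma penrose_unique {A B C : Matrix n n ℂ} (hB : IsPenrose A B) (hC : IsPenrose A C) :
    B = C := by
  obtain ⟨hB1, hB2, hB3, hB4⟩ := hB
  obtain ⟨hC1, hC2, hC3, hC4⟩ := hC
  have hAB : A * B = A * C := by
    calc A * B = (A * B)ᴴ := hB3.symm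
    _ = Bᴴ * Aᴴ := by rw [conjTranspose_mul]
    _ = Bᴴ * (A * C * A)ᴴ := by rw [hC1]
    _ = Bᴴ * (Aᴴ * (A * C)ᴴ) := by rw [conjTranspose_mul]
    _ = (A * B)ᴴ * (A * C)ᴴ := by simp only [conjTranspose_mul, Matrix.mul_assoc]
    _ = (A * B) * (A * C) := by rw [hB3, hC3]
    _ = (A * B * A) * C := by rw [Matrix.mul_assoc, Matrix.mul_assoc, Matrix.mul_assoc]
    _ = A * C := by rw [hB1]
  have hBA : B * A = C * A := by
    calc B * A = (B * A)ᴴ := hB4.symm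
    _ = Aᴴ * Bᴴ := by rw [conjTranspose_mul]
    _ = (A * C * A)ᴴ * Bᴴ := by rw [hC1]
    _ = (C * A)ᴴ * (B * A)ᴴ := by simp only [conjTranspose_mul, Matrix.mul_assoc]
    _ = (C * A) * (B * A) := by rw [hB4, hC4]
    _ = C * (A * B * A) := by rw [Matrix.mul_assoc, Matrix.mul_assoc]
    _ = C * A := by rw [hB1]
  calc B = B * A * B := hB2.symm
  _ = C * A * B := by rw [hBA]
  _ = C * (A * C) := by rw [Matrix.mul_assoc, hAB]
  _ = C := by rw [← Matrix.mul_assoc, hC2]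

lemma pinv_eq {A B : Matrix n n ℂ} (hB : IsPenrose A B) : pinv A = B := by
  have h : ∃ B : Matrix n n ℂ,
      A * B * A = A ∧ B * A * B = B ∧ (A * B)ᴴ = A * B ∧ (B * A)ᴴ = B * A := ⟨B, hB⟩
  rw [pinv, dif_pos h]
  exact penrose_unique h.choose_spec hB

lemma herm_penrose_exists {R : Matrix n n ℂ} (hR : R.IsHermitian) :
    ∃ B : Matrix n n ℂ, IsPenrose R B ∧ Bᴴ = B := by
  set U : Matrix n n ℂ := (hR.eigenvectorUnitary : Matrix n n ℂ) with hU
  set D : Matrix n n ℂ := diagonal (RCLike.ofReal ∘ hR.eigenvalues) with hD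
  set E : Matrix n n ℂ := diagonal (RCLike.ofReal ∘ fun i => (hR.eigenvalues i)⁻¹) with hE
  have hUU : star U * U = 1 := Unitary.coe_star_mul_self hR.eigenvectorUnitary
  have hspec : R = U * D * star U := hR.spectral_theorem
  have hDED : D * E * D = D := by
    rw [hD, hE, diagonal_mul_diagonal, diagonal_mul_diagonal]
    refine congrArg _ (funext fun i => ?_)
    simp only [Function.comp]
    rcases eq_or_ne (hR.eigenvalues i) 0 with h | h
    · simp [h]
    · push_cast
      field_simp
  have hEDE : E * D * E = E := by
    rw [hD, hE, diagonal_mul_diagonal, diagonal_mul_diagonal]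
    refine congrArg _ (funext fun i => ?_)
    simp only [Function.comp]
    rcases eq_or_ne (hR.eigenvalues i) 0 with h | h
    · simp [h]
    · push_cast
      field_simp
  have hDEh : (D * E)ᴴ = D * E := by
    rw [hD, hE, diagonal_mul_diagonal, diagonal_conjTranspose]
    refine congrArg _ (funext fun i => ?_)
    simp [Function.comp, ← Complex.ofReal_mul]
  have hEDh : (E * D)ᴴ = E * D := by
    rw [hD, hE, diagonal_mul_diagonal, diagonal_conjTranspose]
    refine congrArg _ (funext fun i => ?_)
    simp [Function.comp, ← Complex.ofReal_mul]
  refine ⟨U * E * star U, ⟨?_, ?_, ?_, ?_⟩, ?_⟩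
  · rw [hspec]
    calc U * D * star U * (U * E * star U) * (U * D * star U)
        = U * (D * (star U * U) * E * (star U * U) * D) * star U := by
          simp only [Matrix.mul_assoc]
    _ = U * (D * E * D) * star U := by rw [hUU]; simp only [Matrix.mul_one, Matrix.mul_assoc]
    _ = U * D * star U := by rw [hDED, Matrix.mul_assoc]
  · rw [hspec]
    calc U * E * star U * (U * D * star U) * (U * E * star U)
        = U * (E * (star U * U) * D * (star U * U) * E) * star U := by
          simp only [Matrix.mul_assoc]
    _ = U * (E * D * E) * star U := by rw [hUU]; simp only [Matrix.mul_one, Matrix.mul_assoc]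
    _ = U * E * star U := by rw [hEDE, Matrix.mul_assoc]
  · rw [hspec]
    have : U * D * star U * (U * E * star U) = U * (D * E) * star U := by
      calc U * D * star U * (U * E * star U) = U * (D * (star U * U) * E) * star U := by
            simp only [Matrix.mul_assoc]
      _ = U * (D * E) * star U := by rw [hUU]; simp only [Matrix.mul_one, Matrix.mul_assoc]
    rw [this]
    simp only [conjTranspose_mul, conjTranspose_conjTranspose, star_eq_conjTranspose, hDEh, hEDh]
    simp only [Matrix.mul_assoc]
  · rw [hspec]
    have : U * E * star U * (U * D * star U) = U * (E * D) * star U := by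
      calc U * E * star U * (U * D * star U) = U * (E * (star U * U) * D) * star U := by
            simp only [Matrix.mul_assoc]
      _ = U * (E * D) * star U := by rw [hUU]; simp only [Matrix.mul_one, Matrix.mul_assoc]
    rw [this]
    simp only [conjTranspose_mul, conjTranspose_conjTranspose, star_eq_conjTranspose, hDEh, hEDh]
    simp only [Matrix.mul_assoc]
  · simp only [conjTranspose_mul, conjTranspose_conjTranspose, star_eq_conjTranspose, hEDh]
    have : Eᴴ = E := by
      rw [hE, diagonal_conjTranspose]
      refine congrArg _ (funext fun i => ?_)
      simp [Function.comp]
    rw [this, Matrix.mul_assoc]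

variable {m : Type*} [Fintype m]

lemma gram_penrose (A : Matrix n m ℂ) : IsPenrose (A * Aᴴ) (pinv (A * Aᴴ)) := by
  obtain ⟨B, hB, _⟩ := herm_penrose_exists (isHermitian_mul_conjTranspose_self A)
  rw [pinv_eq hB]; exact hB

lemma gram_pinv_herm (A : Matrix n m ℂ) : (pinv (A * Aᴴ))ᴴ = pinv (A * Aᴴ) := by
  obtain ⟨B, hB, hBh⟩ := herm_penrose_exists (isHermitian_mul_conjTranspose_self A)
  rw [pinv_eq hB]; exact hBh

lemma gram_pinv_range (A : Matrix n m ℂ) : (A * Aᴴ) * pinv (A * Aᴴ) * A = A := by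
  obtain ⟨h1, _, h3, _⟩ := gram_penrose A
  set R := A * Aᴴ with hR
  set P := R * pinv R with hP
  have hPh : Pᴴ = P := h3
  have h1P : (1 - P)ᴴ = 1 - P := by rw [conjTranspose_sub, conjTranspose_one, hPh]
  have hN : ((1 - P) * A) * ((1 - P) * A)ᴴ = 0 := by
    have e1 : ((1 - P) * A) * ((1 - P) * A)ᴴ = (1 - P) * R * (1 - P)ᴴ := by
      rw [hR]
      simp only [conjTranspose_mul, Matrix.mul_assoc]
    have h2 : (1 - P) * R = 0 := by
      rw [hP, Matrix.mul_assoc] at h1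
      rw [Matrix.sub_mul, Matrix.one_mul, hP, Matrix.mul_assoc, h1, sub_self]
    rw [e1, h2, Matrix.zero_mul]
  have hNz : ((1 - P) * A)ᴴᴴ * ((1 - P) * A)ᴴ = 0 := by rwa [conjTranspose_conjTranspose]
  have hz : ((1 - P) * A)ᴴ = 0 := conjTranspose_mul_self_eq_zero.mp hNz
  have hz2 : (1 - P) * A = 0 := by
    have := congrArg conjTranspose hz
    rwa [conjTranspose_conjTranspose, conjTranspose_zero] at this
  have hfin : A - P * A = 0 := by rwa [Matrix.sub_mul, Matrix.one_mul] at hz2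
  have := sub_eq_zero.mp hfin
  rw [hP] at this
  rw [← this]

lemma quad_eq (A : Matrix n m ℂ) (w : n → ℂ) :
    star ((A * Aᴴ).mulVec w) ⬝ᵥ (pinv (A * Aᴴ)).mulVec ((A * Aᴴ).mulVec w)
      = star (Aᴴ.mulVec w) ⬝ᵥ (Aᴴ.mulVec w) := by
  obtain ⟨h1, _, _, _⟩ := gram_penrose A
  have hherm : (A * Aᴴ)ᴴ = A * Aᴴ := isHermitian_mul_conjTranspose_self A
  calc star ((A * Aᴴ).mulVec w) ⬝ᵥ (pinv (A * Aᴴ)).mulVec ((A * Aᴴ).mulVec w)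
      = (star w ᵥ* (A * Aᴴ)ᴴ) ⬝ᵥ (pinv (A * Aᴴ) * (A * Aᴴ)).mulVec w := by
        rw [star_mulVec, mulVec_mulVec]
  _ = star w ⬝ᵥ ((A * Aᴴ)ᴴ * (pinv (A * Aᴴ) * (A * Aᴴ))).mulVec w := by
        rw [← dotProduct_mulVec, mulVec_mulVec]
  _ = star w ⬝ᵥ ((A * Aᴴ) * pinv (A * Aᴴ) * (A * Aᴴ)).mulVec w := by
        rw [hherm]; simp only [Matrix.mul_assoc]
  _ = star w ⬝ᵥ (A * Aᴴ).mulVec w := by rw [h1]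
  _ = (star w ᵥ* A) ⬝ᵥ Aᴴ.mulVec w := by
        rw [dotProduct_mulVec, dotProduct_mulVec, vecMul_vecMul]
  _ = star (Aᴴ.mulVec w) ⬝ᵥ (Aᴴ.mulVec w) := by
        rw [star_mulVec, conjTranspose_conjTranspose]

lemma re_dot_nonneg (v : m → ℂ) : 0 ≤ (star v ⬝ᵥ v).re := by
  simp only [dotProduct, Pi.star_apply, Complex.re_sum]
  refine Finset.sum_nonneg fun i _ => ?_
  rw [RCLike.star_def, mul_comm, Complex.mul_conj]
  simp [Complex.normSq_nonneg]

lemma star_dot_comm (a b : m → ℂ) : star (star a ⬝ᵥ b) = star b ⬝ᵥ a := by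
  simp only [dotProduct, star_sum, Pi.star_apply, star_mul', star_star]
  exact Finset.sum_congr rfl fun i _ => mul_comm _ _

lemma pythagoras {a b : m → ℂ} (h : star a ⬝ᵥ b = 0) :
    (star (a + b) ⬝ᵥ (a + b)).re = (star a ⬝ᵥ a).re + (star b ⬝ᵥ b).re := by
  have h2 : star b ⬝ᵥ a = 0 := by rw [← star_dot_comm, h, star_zero]
  rw [star_add, add_dotProduct, dotProduct_add, dotProduct_add, h, h2]
  simp

/-- Minimizing `yᴴ R⁺ y` over completions of `y_Ω` (with `y` ranging over the range of
`R = A Aᴴ`) yields `y_Ωᴴ R_Ω⁺ y_Ω`, where `R_Ω = A_Ω A_Ωᴴ`. -/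
theorem min_quadform_over_completions {M r : ℕ}
    (A : Matrix (Fin M) (Fin r) ℂ) (Ω : Finset (Fin M))
    (yΩ : {i // i ∈ Ω} → ℂ)
    (hyΩ : ∃ x : Fin r → ℂ, (A.submatrix (Subtype.val : {i // i ∈ Ω} → Fin M) id).mulVec x = yΩ) :
    IsLeast {t : ℝ | ∃ y : Fin M → ℂ,
        (∀ i (hi : i ∈ Ω), y i = yΩ ⟨i, hi⟩) ∧
        (∃ w, (A * Aᴴ).mulVec w = y) ∧
        t = (star y ⬝ᵥ (pinv (A * Aᴴ)).mulVec y).re}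
      ((star yΩ ⬝ᵥ (pinv ((A * Aᴴ).submatrix
          (Subtype.val : {i // i ∈ Ω} → Fin M)
          (Subtype.val : {i // i ∈ Ω} → Fin M))).mulVec yΩ).re) := by
  classical
  set AΩ : Matrix {i // i ∈ Ω} (Fin r) ℂ :=
    A.submatrix (Subtype.val : {i // i ∈ Ω} → Fin M) id with hAΩ
  have hsub : (A * Aᴴ).submatrix (Subtype.val : {i // i ∈ Ω} → Fin M)
      (Subtype.val : {i // i ∈ Ω} → Fin M) = AΩ * AΩᴴ := by
    ext i j
    simp [Matrix.mul_apply, hAΩ, conjTranspose_apply]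
  rw [hsub]
  obtain ⟨x, hx⟩ := hyΩ
  set wΩ : {i // i ∈ Ω} → ℂ := (pinv (AΩ * AΩᴴ)).mulVec yΩ with hwΩ
  set x₀ : Fin r → ℂ := AΩᴴ.mulVec wΩ with hx₀
  -- R_Ω R_Ω⁺ y_Ω = y_Ω
  have hy' : (AΩ * AΩᴴ).mulVec wΩ = yΩ := by
    rw [hwΩ, mulVec_mulVec, ← hx, mulVec_mulVec, gram_pinv_range, hx]
  have hfix : AΩ.mulVec x₀ = yΩ := by
    rw [hx₀, mulVec_mulVec]; exact hy'
  -- the common value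
  have hval : star yΩ ⬝ᵥ (pinv (AΩ * AΩᴴ)).mulVec yΩ = star x₀ ⬝ᵥ x₀ := by
    have := quad_eq AΩ wΩ
    rw [hy'] at this
    rw [this, hx₀]
  constructor
  · -- membership
    set w' : Fin M → ℂ := fun i => if h : i ∈ Ω then wΩ ⟨i, h⟩ else 0 with hw'
    have hAw : Aᴴ.mulVec w' = x₀ := by
      funext k
      rw [hx₀]
      simp only [mulVec, dotProduct]
      rw [← Finset.sum_subset (Finset.subset_univ Ω)
        (by intro i _ hiΩ; simp [hw', dif_neg hiΩ])]
      rw [← Finset.sum_attach Ω (fun i => Aᴴ k i * w' i)]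
      rw [Finset.univ_eq_attach]
      refine Finset.sum_congr rfl fun i _ => ?_
      simp [hw', hAΩ, conjTranspose_apply]
    refine ⟨A.mulVec x₀, ?_, ⟨w', ?_⟩, ?_⟩
    · intro i hi
      have : (AΩ.mulVec x₀) ⟨i, hi⟩ = (A.mulVec x₀) i := by
        simp [hAΩ, mulVec, dotProduct]
      rw [← this, hfix]
    · rw [← Matrix.mulVec_mulVec, hAw]
    · have h1 : (A * Aᴴ).mulVec w' = A.mulVec x₀ := by
        rw [← Matrix.mulVec_mulVec, hAw]
      have h2 := quad_eq A w'
      rw [h1, hAw] at h2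
      rw [h2, hval]
  · -- lower bound
    rintro t ⟨y, hyfix, ⟨w, hw⟩, ht⟩
    set xw : Fin r → ℂ := Aᴴ.mulVec w with hxw
    have hqt : t = (star xw ⬝ᵥ xw).re := by
      rw [ht, ← hw, quad_eq A w]
    have hAx : AΩ.mulVec xw = yΩ := by
      funext i
      have : (AΩ.mulVec xw) i = (A.mulVec xw) i.val := by
        simp [hAΩ, mulVec, dotProduct]
      rw [this, hxw, Matrix.mulVec_mulVec, hw, hyfix i.val i.prop]
    set d : Fin r → ℂ := xw - x₀ with hd
    have hcross : star x₀ ⬝ᵥ d = 0 := by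
      have hAd : AΩ.mulVec d = 0 := by
        rw [hd, Matrix.mulVec_sub, hAx, hfix, sub_self]
      rw [hx₀, star_mulVec, conjTranspose_conjTranspose, ← dotProduct_mulVec, hAd,
        dotProduct_zero]
    have hxsum : xw = x₀ + d := by rw [hd]; ring
    rw [hval, hqt, hxsum, pythagoras hcross]
    have := re_dot_nonneg d
    linarith
end

section
/- Let W(z) = Σ_{m ∈ Ω} w_m z^{m−1} be a polynomial of degree at most M̄ − 1 (with Ω ⊆ {1,…,M̄}) and let W̄ = sup_{f ∈ [0,1)} |W(e^{i2πf})|. Then for any integer N > π M̄ and the uniform grid {0, 1/N, …, (N−1)/N}: W̄ ≤ (1 − π M̄ / N)^{-1} · max_{0 ≤ m ≤ N−1} |W(e^{i2π m/N})|. -/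
/-!
Write `W(f) = p(e^{2πif})` with `p` a polynomial of degree at most `M̄`. By Bernstein's inequality
`‖p'‖ ≤ M̄ W̄` on the unit circle, `f ↦ W(f)` is `2π M̄ W̄`-Lipschitz. Every `f` lies within
`1/(2N)` of a grid point, so `W̄ ≤ max_grid |W| + (π M̄ / N) W̄`, which rearranges to the claim.

Bernstein's inequality comes from Gauss–Lucas. Let `‖p‖ ≤ M` on the circle and suppose
`‖p'(z)‖ > n M` at some `‖z‖ = 1`; put `c = p'(z) / (n z^{n-1})`, so `‖c‖ > M`. The maximum
principle applied to the reflected polynomial gives `‖p(w)‖ ≤ M ‖w‖^n` for `‖w‖ ≥ 1`, so all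
roots of `p - c X^n` lie in the open unit disk, hence so do those of its derivative; but that
derivative vanishes at `z`.
-/

open Complex Real
open scoped Polynomial

theorem cexp_two_pi_I_mul_add_intCast (x : ℂ) (k : ℤ) :
    cexp (2 * π * I * (x + k)) = cexp (2 * π * I * x) := by
  rw [mul_add, Complex.exp_add, mul_comm _ (k : ℂ), exp_int_mul_two_pi_mul_I, mul_one]

theorem exists_mem_Ico_cexp_two_pi_I_mul_eq {z : ℂ} (hz : ‖z‖ = 1) :
    ∃ f ∈ Set.Ico (0 : ℝ) 1, cexp (2 * π * I * f) = z := by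
  set t := z.arg / (2 * π)
  refine ⟨Int.fract t, ⟨Int.fract_nonneg t, Int.fract_lt_one t⟩, ?_⟩
  have hfract : ((Int.fract t : ℝ) : ℂ) = t + ((-⌊t⌋ : ℤ) : ℂ) := by
    rw [Int.fract]; push_cast; ring
  have harg : 2 * π * I * t = z.arg * I := by
    push_cast [t]; field_simp
  rw [hfract, cexp_two_pi_I_mul_add_intCast, harg]
  simpa [hz] using Complex.norm_mul_exp_arg_mul_I z

theorem exists_fin_abs_sub_div_add_intCast_le {N : ℕ} (hN : 0 < N) (x : ℝ) :
    ∃ (m : Fin N) (k : ℤ), |x - ((m : ℕ) / N + k)| ≤ 1 / (2 * N) := by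
  set j := round (N * x)
  have hN' : (0 : ℤ) < N := by exact_mod_cast hN
  have hmod_nonneg := Int.emod_nonneg j hN'.ne'
  have hmod_lt := Int.emod_lt_of_pos j hN'
  refine ⟨⟨(j % N).toNat, by omega⟩, j / N, ?_⟩
  have hj : (((j % N).toNat : ℕ) : ℝ) / N + ((j / N : ℤ) : ℝ) = j / N := by
    have hdiv := congrArg (fun i : ℤ => (i : ℝ)) (Int.emod_add_mul_ediv j N)
    have hmod : (((j % N).toNat : ℤ) : ℝ) = ((j % N : ℤ) : ℝ) := by
      rw [Int.toNat_of_nonneg hmod_nonneg]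
    push_cast at hdiv hmod ⊢
    field_simp
    linarith
  have hNR : (0 : ℝ) < N := by exact_mod_cast hN
  rw [hj, show x - j / N = (N * x - j) / N by field_simp, abs_div, abs_of_pos hNR,
    div_le_div_iff₀ hNR (by positivity)]
  nlinarith [abs_sub_round (N * x)]

namespace Polynomial

theorem exists_natDegree_le_eval_cexp_eq {n : ℕ} (w : Fin n → ℂ) :
    ∃ p : ℂ[X], p.natDegree ≤ n ∧ ∀ x : ℂ,
      p.eval (cexp (2 * π * I * x)) = ∑ m : Fin n, w m * cexp (2 * π * I * (m : ℕ) * x) := by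
  refine ⟨∑ m : Fin n, C (w m) * X ^ (m : ℕ), ?_, fun x => ?_⟩
  · exact natDegree_sum_le_of_forall_le _ _ fun m _ =>
      (natDegree_C_mul_X_pow_le _ _).trans m.is_lt.le
  · simp only [eval_finsetSum, eval_C_mul, eval_pow, eval_X, ← Complex.exp_nat_mul]
    refine Finset.sum_congr rfl fun m _ => ?_
    ring_nf

variable {p : ℂ[X]} {n : ℕ} {M : ℝ}

theorem eval_reflect_inv_mul_pow (hp : p.natDegree ≤ n) {x : ℂ} (hx : x ≠ 0) :
    (p.reflect n).eval x⁻¹ * x ^ n = p.eval x := by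
  let := invertibleOfNonzero hx
  rw [← invOf_eq_inv]
  exact eval₂_reflect_mul_pow (RingHom.id ℂ) x n p hp

section CircleBound

variable (hp : p.natDegree ≤ n) (hM : ∀ z : ℂ, ‖z‖ = 1 → ‖p.eval z‖ ≤ M)
include hp hM

theorem norm_eval_reflect_le_of_norm_le_one {u : ℂ} (hu : ‖u‖ ≤ 1) :
    ‖(p.reflect n).eval u‖ ≤ M := by
  have hu : u ∈ closure (Metric.ball (0 : ℂ) 1) := by
    rwa [closure_ball 0 one_ne_zero, mem_closedBall_zero_iff]
  refine Complex.norm_le_of_forall_mem_frontier_norm_le (f := fun z => (p.reflect n).eval z)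
    Metric.isBounded_ball (Polynomial.differentiable _).diffContOnCl (fun ζ hζ => ?_) hu
  rw [frontier_ball 0 one_ne_zero, mem_sphere_zero_iff_norm] at hζ
  have hζ0 : ζ⁻¹ ≠ 0 := inv_ne_zero (norm_ne_zero_iff.1 (by simp [hζ]))
  have hreflect := eval_reflect_inv_mul_pow hp hζ0
  rw [inv_inv] at hreflect
  calc ‖(p.reflect n).eval ζ‖ = ‖(p.reflect n).eval ζ * ζ⁻¹ ^ n‖ := by simp [hζ]
    _ ≤ M := by rw [hreflect]; exact hM _ (by simp [hζ])

theorem norm_eval_le_mul_norm_pow_of_one_le_norm {w : ℂ} (hw : 1 ≤ ‖w‖) :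
    ‖p.eval w‖ ≤ M * ‖w‖ ^ n := by
  have hw0 : w ≠ 0 := norm_pos_iff.1 (one_pos.trans_le hw)
  rw [← eval_reflect_inv_mul_pow hp hw0, norm_mul, norm_pow]
  gcongr
  exact norm_eval_reflect_le_of_norm_le_one hp hM (by simpa using inv_le_one_of_one_le₀ hw)

theorem norm_coeff_le : ‖p.coeff n‖ ≤ M := by
  simpa [← coeff_zero_eq_eval_zero, coeff_reflect] using
    norm_eval_reflect_le_of_norm_le_one hp hM (u := 0) (by simp)

theorem norm_lt_one_of_isRoot_sub_C_mul_X_pow {c : ℂ} (hc : M < ‖c‖) {r : ℂ}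
    (hr : (p - C c * X ^ n).IsRoot r) : ‖r‖ < 1 := by
  by_contra! hr1
  have hpr : p.eval r = c * r ^ n := by
    simpa [sub_eq_zero] using hr
  have hgrowth := norm_eval_le_mul_norm_pow_of_one_le_norm hp hM hr1
  rw [hpr, norm_mul, norm_pow] at hgrowth
  have : 0 < ‖r‖ ^ n := pow_pos (one_pos.trans_le hr1) n
  nlinarith

theorem norm_eval_derivative_le {z : ℂ} (hz : ‖z‖ = 1) :
    ‖p.derivative.eval z‖ ≤ n * M := by
  rcases Nat.eq_zero_or_pos n with rfl | hn
  · simp [derivative_eq_zero.2 (Nat.le_zero.1 hp)]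
  by_contra! hlt
  have hz0 : z ≠ 0 := norm_ne_zero_iff.1 (by simp [hz])
  have hnz : (n : ℂ) * z ^ (n - 1) ≠ 0 := mul_ne_zero (by exact_mod_cast hn.ne') (pow_ne_zero _ hz0)
  set c := p.derivative.eval z / (n * z ^ (n - 1))
  have hc : M < ‖c‖ := by
    rw [norm_div, norm_mul, norm_pow, hz, one_pow, mul_one, Complex.norm_natCast,
      lt_div_iff₀ (by positivity)]
    linarith
  set g := p - C c * X ^ n
  have hg_coeff : g.coeff n ≠ 0 := by
    have hcoeff := norm_coeff_le hp hM
    simp only [g, coeff_sub, coeff_C_mul_X_pow, if_true, sub_ne_zero]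
    intro h
    rw [h] at hcoeff
    linarith
  have hg_deg : g.natDegree = n := by
    refine le_antisymm ?_ (le_natDegree_of_ne_zero hg_coeff)
    simpa using natDegree_sub_le_of_le hp (natDegree_C_mul_X_pow_le c n)
  have hz_root : z ∈ g.derivative.rootSet ℂ := by
    rw [mem_rootSet, coe_aeval_eq_eval]
    refine ⟨derivative_ne_zero.2 (by omega), ?_⟩
    simp only [g, derivative_sub, derivative_C_mul_X_pow, eval_sub, eval_C_mul, eval_pow,
      eval_X, c]
    rw [mul_assoc, div_mul_cancel₀ _ hnz, sub_self]
  have hroots : g.rootSet ℂ ⊆ Metric.ball 0 1 := fun r hr => by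
    rw [mem_rootSet, coe_aeval_eq_eval] at hr
    exact mem_ball_zero_iff.2 (norm_lt_one_of_isRoot_sub_C_mul_X_pow hp hM hc hr.2)
  have hz_ball := convexHull_min hroots (convex_ball 0 1)
    (rootSet_derivative_subset_convexHull_rootSet
      (by rw [← natDegree_pos_iff_degree_pos]; omega) hz_root)
  simp [hz] at hz_ball

theorem norm_eval_cexp_sub_le (x y : ℝ) :
    ‖p.eval (cexp (2 * π * I * x)) - p.eval (cexp (2 * π * I * y))‖ ≤
      2 * π * n * M * |x - y| := by
  have hnorm (t : ℝ) : ‖cexp (2 * π * I * t)‖ = 1 := by simp [Complex.norm_exp]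
  have hderiv (t : ℝ) : HasDerivAt (fun t : ℝ => p.eval (cexp (2 * π * I * t)))
      (p.derivative.eval (cexp (2 * π * I * t)) * (cexp (2 * π * I * t) * (2 * π * I * 1))) t :=
    (p.hasDerivAt _).comp t (((hasDerivAt_id (t : ℂ)).const_mul (2 * π * I)).cexp.comp_ofReal)
  have hbound (t : ℝ) : ‖p.derivative.eval (cexp (2 * π * I * t)) *
      (cexp (2 * π * I * t) * (2 * π * I * 1))‖ ≤ 2 * π * n * M := by
    have h2pi : ‖(2 * π * I * 1 : ℂ)‖ = 2 * π := by simp [abs_of_pos pi_pos]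
    rw [norm_mul, norm_mul, hnorm, h2pi, one_mul, mul_comm, mul_assoc (2 * π)]
    exact mul_le_mul_of_nonneg_left (norm_eval_derivative_le hp hM (hnorm t)) (by positivity)
  simpa [Real.norm_eq_abs] using Convex.norm_image_sub_le_of_norm_hasDerivWithin_le
    (fun t _ => (hderiv t).hasDerivWithinAt) (fun t _ => hbound t) convex_univ
    (Set.mem_univ y) (Set.mem_univ x)

theorem norm_eval_cexp_le_of_forall_grid_le {N : ℕ} (hN : 0 < N) {G : ℝ}
    (hG : ∀ m : Fin N, ‖p.eval (cexp (2 * π * I * ((m : ℕ) / N)))‖ ≤ G) (x : ℝ) :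
    ‖p.eval (cexp (2 * π * I * x))‖ ≤ G + π * n / N * M := by
  obtain ⟨m, k, hxs⟩ := exists_fin_abs_sub_div_add_intCast_le hN x
  set s : ℝ := (m : ℕ) / N + k
  have hs : cexp (2 * π * I * s) = cexp (2 * π * I * ((m : ℕ) / N)) := by
    push_cast [s]; exact cexp_two_pi_I_mul_add_intCast _ k
  have hM0 : 0 ≤ M := (norm_nonneg _).trans (hM 1 norm_one)
  calc ‖p.eval (cexp (2 * π * I * x))‖
      ≤ ‖p.eval (cexp (2 * π * I * s))‖ +
          ‖p.eval (cexp (2 * π * I * x)) - p.eval (cexp (2 * π * I * s))‖ :=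
        norm_le_norm_add_norm_sub' _ _
    _ ≤ G + 2 * π * n * M * (1 / (2 * N)) := by
        gcongr
        · exact hs ▸ hG m
        · exact (norm_eval_cexp_sub_le hp hM x s).trans
            (mul_le_mul_of_nonneg_left hxs (mul_nonneg (by positivity) hM0))
    _ = G + π * n / N * M := by field_simp

end CircleBound

end Polynomial

/-- Discretization bound: for a polynomial `W(e^{i2πf}) = Σ_m w_m e^{i2πmf}` of degree at most
`Mbar − 1`, the sup over `f ∈ [0,1)` of `|W|` is at most `(1 − πMbar/N)⁻¹` times the maximum of `|W|`
on the uniform `N`-point grid, whenever `N > πMbar`. -/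
theorem sup_abs_le_inv_mul_grid_max (Mbar N : ℕ) (w : Fin Mbar → ℂ)
    (hN : Real.pi * (Mbar : ℝ) < (N : ℝ)) :
    sSup {r : ℝ | ∃ f ∈ Set.Ico (0 : ℝ) 1,
        r = ‖(∑ m : Fin Mbar, w m * Complex.exp (2 * π * I * (m : ℕ) * (f : ℂ)))‖}
      ≤ (1 - Real.pi * (Mbar : ℝ) / (N : ℝ))⁻¹ *
        sSup {r : ℝ | ∃ m : Fin N,
          r = ‖(∑ m' : Fin Mbar,
            w m' * Complex.exp (2 * π * I * (m' : ℕ) * (((m : ℕ) : ℂ) / (N : ℂ))))‖} := by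
  obtain ⟨p, hp, hpW⟩ := Polynomial.exists_natDegree_le_eval_cexp_eq w
  simp only [← hpW]
  set A := {r : ℝ | ∃ f ∈ Set.Ico (0 : ℝ) 1, r = ‖p.eval (cexp (2 * π * I * f))‖}
  set B := {r : ℝ | ∃ m : Fin N, r = ‖p.eval (cexp (2 * π * I * ((m : ℕ) / N)))‖}
  have hNR : 0 < (N : ℝ) := (mul_nonneg pi_pos.le Mbar.cast_nonneg).trans_lt hN
  have hA : BddAbove A := by
    refine ((isCompact_sphere (0 : ℂ) 1).bddAbove_image (f := fun z => ‖p.eval z‖)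
      p.continuous.norm.continuousOn).mono ?_
    rintro r ⟨f, -, rfl⟩
    exact ⟨_, by simp [Complex.norm_exp], rfl⟩
  have hB : BddAbove B := (Set.finite_range _).bddAbove.mono <| by
    rintro r ⟨m, rfl⟩
    exact ⟨m, rfl⟩
  have hcircle (z : ℂ) (hz : ‖z‖ = 1) : ‖p.eval z‖ ≤ sSup A := by
    obtain ⟨f, hf, rfl⟩ := exists_mem_Ico_cexp_two_pi_I_mul_eq hz
    exact le_csSup hA ⟨f, hf, rfl⟩
  have hself : sSup A ≤ sSup B + π * Mbar / N * sSup A :=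
    csSup_le ⟨_, 0, ⟨le_rfl, one_pos⟩, rfl⟩ fun r ⟨f, _, hr⟩ => hr ▸
      p.norm_eval_cexp_le_of_forall_grid_le hp hcircle (by exact_mod_cast hNR)
        (fun m => le_csSup hB ⟨m, rfl⟩) f
  have hc : π * Mbar / N < 1 := (div_lt_one hNR).2 hN
  rw [le_inv_mul_iff₀ (by linarith)]
  linarith
end

section
/- By duality of the dual-norm bounds, the atomic norms satisfy: (1 − π M̄ / N) ‖z_Ω‖_{𝒜_N(Ω)} ≤ ‖z_Ω‖_{𝒜(Ω)} ≤ ‖z_Ω‖_{𝒜_N(Ω)} for all z_Ω ∈ ℂ^L and N > π M̄, i.e., the grid-based ℓ₁ atomic norm converges to the continuous atomic norm as the grid size N → ∞. -/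
/-!
The right inequality holds because every grid atom is a continuous atom. For the left one it
suffices to write each continuous atom as a nonnegative combination of grid atoms of total weight
at most `exp (π (M̄ - 1) / N) ≤ (1 - π M̄ / N)⁻¹`. Rounding the frequency `f` to the nearest grid
point `m / N` leaves an offset `δ` with `|δ| ≤ 1 / (2N)`; after centring the sampling window
`[Ω₀, Ω₀ + b]`, `b = M̄ - 1`, it remains to synthesise `ρ ↦ exp (2πiδ (ρ - b/2))`, `ρ = 0, …, b`,
from the characters of `ZMod N`. The ramp `ρ - b/2` is synthesised by a modulated Fejér kernel of
ℓ¹-norm at most `b` (the Fejér kernel is nonnegative, so its ℓ¹-norm is its value `b` at frequency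
`0`, and `2b < N` rules out aliasing), and its exponential by the convolution exponential, of
ℓ¹-norm at most `exp (2π|δ| b)`.
-/

open Complex Real
open scoped ENNReal

/-- The atomic norm induced by a set of atoms `𝒜 ⊆ ℂ^n` (value `+∞` if no representation
exists). -/
noncomputable def atomicNorm {n : Type*} [Fintype n] (𝒜 : Set (n → ℂ)) (y : n → ℂ) : ℝ≥0∞ :=
  sInf {t : ℝ≥0∞ | ∃ (k : ℕ) (c : Fin k → ℝ) (a : Fin k → (n → ℂ)),
    (∀ i, 0 ≤ c i) ∧ (∀ i, a i ∈ 𝒜) ∧ y = ∑ i, (c i : ℂ) • a i ∧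
    t = ∑ i, ENNReal.ofReal (c i)}

lemma Int.sum_Ico_sum_Ico_ite_eq_sub (b ρ : ℤ) (hρ : |ρ| ≤ b) :
    ∑ s ∈ Finset.Ico 0 b, ∑ s' ∈ Finset.Ico 0 b, (if s' = s - ρ then 1 else 0 : ℤ) = b - |ρ| := by
  simp only [Finset.sum_ite_eq', Finset.sum_boole]
  have : (Finset.Ico 0 b).filter (fun s => s - ρ ∈ Finset.Ico 0 b)
      = Finset.Ico (max 0 ρ) (min b (b + ρ)) := by
    ext s
    simp only [Finset.mem_filter, Finset.mem_Ico]
    omega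
  rw [this, Int.card_Ico]
  rcases abs_cases ρ with ⟨h, _⟩ | ⟨h, _⟩ <;> omega

namespace ZMod

variable {N : ℕ} [NeZero N]

lemma sum_stdAddChar_mul (x : ZMod N) :
    ∑ t, stdAddChar (x * t) = if x = 0 then (N : ℂ) else 0 := by
  simp_rw [mul_comm x]
  rw [AddChar.sum_mulShift x (isPrimitive_stdAddChar N), ZMod.card]
  split_ifs <;> simp

noncomputable def synth (c : ZMod N → ℂ) (ρ : ZMod N) : ℂ := ∑ t, c t * stdAddChar (ρ * t)

lemma synth_const_mul (a : ℂ) (c : ZMod N → ℂ) (ρ : ZMod N) :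
    synth (fun t => a * c t) ρ = a * synth c ρ := by
  simp only [synth, Finset.mul_sum, mul_assoc]

lemma synth_sub (c d : ZMod N → ℂ) (ρ : ZMod N) :
    synth (fun t => c t - d t) ρ = synth c ρ - synth d ρ := by
  simp only [synth, sub_mul, Finset.sum_sub_distrib]

lemma synth_modulate (a : ZMod N) (c : ZMod N → ℂ) (ρ : ZMod N) :
    synth (fun t => stdAddChar (a * t) * c t) ρ = synth c (ρ + a) := by
  simp only [synth, add_mul, AddChar.map_add_eq_mul]
  exact Finset.sum_congr rfl fun t _ => by ring

lemma synth_translate (m : ZMod N) (c : ZMod N → ℂ) (ρ : ZMod N) :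
    synth (fun t => c (t - m)) ρ = stdAddChar (ρ * m) * synth c ρ := by
  rw [synth, synth, Finset.mul_sum, ← Equiv.sum_comp (Equiv.addRight m)]
  refine Finset.sum_congr rfl fun t _ => ?_
  simp only [Equiv.coe_addRight, add_sub_cancel_right, mul_add, AddChar.map_add_eq_mul]
  ring

noncomputable def conv (c d : ZMod N → ℂ) (t : ZMod N) : ℂ := ∑ s, c s * d (t - s)

lemma synth_conv (c d : ZMod N → ℂ) (ρ : ZMod N) :
    synth (conv c d) ρ = synth c ρ * synth d ρ := by
  rw [synth, synth, synth, Finset.sum_mul_sum]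
  simp only [conv, Finset.sum_mul]
  rw [Finset.sum_comm]
  refine Finset.sum_congr rfl fun s _ => ?_
  rw [← Equiv.sum_comp (Equiv.addRight s)]
  refine Finset.sum_congr rfl fun t _ => ?_
  simp only [Equiv.coe_addRight, add_sub_cancel_right, mul_add, AddChar.map_add_eq_mul]
  ring

lemma sum_norm_conv_le (c d : ZMod N → ℂ) :
    ∑ t, ‖conv c d t‖ ≤ (∑ t, ‖c t‖) * ∑ t, ‖d t‖ :=
  calc ∑ t, ‖conv c d t‖ ≤ ∑ t, ∑ s, ‖c s‖ * ‖d (t - s)‖ :=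
        Finset.sum_le_sum fun t _ => (norm_sum_le _ _).trans_eq (by simp only [norm_mul])
    _ = ∑ s, ‖c s‖ * ∑ t, ‖d (t - s)‖ := by rw [Finset.sum_comm]; simp only [Finset.mul_sum]
    _ = (∑ t, ‖c t‖) * ∑ t, ‖d t‖ := by
        rw [Finset.sum_mul]
        refine Finset.sum_congr rfl fun s _ => ?_
        rw [← Equiv.sum_comp (Equiv.subRight s) (fun t => ‖d t‖)]
        rfl

noncomputable def convPow (c : ZMod N → ℂ) : ℕ → ZMod N → ℂ
  | 0 => Pi.single 0 1
  | k + 1 => conv c (convPow c k)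

lemma synth_convPow (c : ZMod N → ℂ) (k : ℕ) (ρ : ZMod N) :
    synth (convPow c k) ρ = synth c ρ ^ k := by
  induction k with
  | zero => simp [convPow, synth, Pi.single_apply]
  | succ k ih => rw [convPow, synth_conv, ih, pow_succ']

lemma sum_norm_convPow_le (c : ZMod N → ℂ) (k : ℕ) :
    ∑ t, ‖convPow c k t‖ ≤ (∑ t, ‖c t‖) ^ k := by
  induction k with
  | zero => simp [convPow, Pi.single_apply, apply_ite]
  | succ k ih =>
    rw [convPow, pow_succ']
    exact (sum_norm_conv_le _ _).trans
      (mul_le_mul_of_nonneg_left ih (Finset.sum_nonneg fun _ _ => norm_nonneg _))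

noncomputable def convExp (z : ℂ) (c : ZMod N → ℂ) (t : ZMod N) : ℂ :=
  ∑' k : ℕ, z ^ k / k.factorial * convPow c k t

lemma sum_norm_convExp_term_le (z : ℂ) (c : ZMod N → ℂ) (k : ℕ) :
    ∑ t, ‖z ^ k / k.factorial * convPow c k t‖ ≤ (‖z‖ * ∑ t, ‖c t‖) ^ k / k.factorial := by
  simp only [norm_mul, norm_div, norm_pow, Complex.norm_natCast, ← Finset.mul_sum, mul_pow]
  rw [mul_div_right_comm]
  exact mul_le_mul_of_nonneg_left (sum_norm_convPow_le c k) (by positivity)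

lemma summable_norm_convExp_term (z : ℂ) (c : ZMod N → ℂ) (t : ZMod N) :
    Summable fun k : ℕ => ‖z ^ k / k.factorial * convPow c k t‖ :=
  (Real.summable_pow_div_factorial _).of_nonneg_of_le (fun _ => norm_nonneg _) fun k =>
    (Finset.single_le_sum (fun t _ => norm_nonneg (z ^ k / k.factorial * convPow c k t))
      (Finset.mem_univ t)).trans (sum_norm_convExp_term_le z c k)

lemma synth_convExp (z : ℂ) (c : ZMod N → ℂ) (ρ : ZMod N) :
    synth (convExp z c) ρ = exp (z * synth c ρ) := by
  have hsum t := ((summable_norm_convExp_term z c t).of_norm).mul_right (stdAddChar (ρ * t))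
  rw [synth]
  simp only [convExp, ← tsum_mul_right]
  rw [← Summable.tsum_finsetSum fun t _ => hsum t, Complex.exp_eq_exp_ℂ,
    NormedSpace.exp_eq_tsum_div]
  refine tsum_congr fun k => ?_
  rw [mul_pow, ← synth_convPow, synth, Finset.mul_sum, Finset.sum_div]
  exact Finset.sum_congr rfl fun t _ => by ring

lemma sum_norm_convExp_le (z : ℂ) (c : ZMod N → ℂ) :
    ∑ t, ‖convExp z c t‖ ≤ Real.exp (‖z‖ * ∑ t, ‖c t‖) := by
  rw [Real.exp_eq_exp_ℝ, NormedSpace.exp_eq_tsum_div]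
  calc ∑ t, ‖convExp z c t‖
      ≤ ∑ t, ∑' k : ℕ, ‖z ^ k / k.factorial * convPow c k t‖ :=
        Finset.sum_le_sum fun t _ => norm_tsum_le_tsum_norm (summable_norm_convExp_term z c t)
    _ = ∑' k : ℕ, ∑ t, ‖z ^ k / k.factorial * convPow c k t‖ :=
        (Summable.tsum_finsetSum fun t _ => summable_norm_convExp_term z c t).symm
    _ ≤ ∑' k : ℕ, (‖z‖ * ∑ t, ‖c t‖) ^ k / k.factorial :=
        Summable.tsum_le_tsum (sum_norm_convExp_term_le z c)
          (summable_sum fun t _ => summable_norm_convExp_term z c t)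
          (Real.summable_pow_div_factorial _)

noncomputable def dirichletKernel (b : ℕ) (t : ZMod N) : ℂ :=
  ∑ s ∈ Finset.Ico (0 : ℤ) b, stdAddChar (-((s : ZMod N) * t))

noncomputable def fejerKernel (b : ℕ) (t : ZMod N) : ℂ :=
  ((N : ℝ)⁻¹ * normSq (dirichletKernel b t) : ℝ)

lemma fejerKernel_mul_stdAddChar (b : ℕ) (ρ : ℤ) (t : ZMod N) :
    fejerKernel b t * stdAddChar ((ρ : ZMod N) * t) = (N : ℂ)⁻¹ *
      ∑ s ∈ Finset.Ico (0 : ℤ) b, ∑ s' ∈ Finset.Ico (0 : ℤ) b,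
        stdAddChar (((ρ + s' - s : ℤ) : ZMod N) * t) := by
  have hconj : (starRingEnd ℂ) (dirichletKernel b t)
      = ∑ s ∈ Finset.Ico (0 : ℤ) b, stdAddChar ((s : ZMod N) * t) := by
    simp only [dirichletKernel, map_sum, ← AddChar.map_neg_eq_conj, neg_neg]
  rw [fejerKernel, ofReal_mul, ofReal_inv, ofReal_natCast, ← mul_conj, hconj, dirichletKernel,
    Finset.sum_mul_sum, mul_assoc, Finset.sum_mul]
  congr 1
  refine Finset.sum_congr rfl fun s _ => ?_
  rw [Finset.sum_mul]
  refine Finset.sum_congr rfl fun s' _ => ?_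
  rw [← AddChar.map_add_eq_mul, ← AddChar.map_add_eq_mul]
  push_cast
  ring_nf

lemma synth_fejerKernel {b : ℕ} (hb : 2 * b < N) {ρ : ℤ} (hρ : |ρ| ≤ b) :
    synth (fejerKernel b) (ρ : ZMod N) = ((b - |ρ| : ℤ) : ℂ) := by
  have hN : (N : ℂ) ≠ 0 := Nat.cast_ne_zero.2 (NeZero.ne N)
  have hvanish : ∀ s ∈ Finset.Ico (0 : ℤ) b, ∀ s' ∈ Finset.Ico (0 : ℤ) b,
      (((ρ + s' - s : ℤ) : ZMod N) = 0 ↔ s' = s - ρ) := by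
    intro s hs s' hs'
    rw [Finset.mem_Ico] at hs hs'
    rw [abs_le] at hρ
    rw [ZMod.intCast_zmod_eq_zero_iff_dvd]
    constructor
    · intro hdvd
      have := Int.eq_zero_of_abs_lt_dvd hdvd (abs_lt.2 ⟨by omega, by omega⟩)
      omega
    · rintro rfl
      simp
  calc synth (fejerKernel b) (ρ : ZMod N)
      = (N : ℂ)⁻¹ * ∑ s ∈ Finset.Ico (0 : ℤ) b, ∑ s' ∈ Finset.Ico (0 : ℤ) b,
          ∑ t, stdAddChar (((ρ + s' - s : ℤ) : ZMod N) * t) := by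
        simp only [synth, fejerKernel_mul_stdAddChar, ← Finset.mul_sum]
        rw [Finset.sum_comm]
        exact congrArg _ (Finset.sum_congr rfl fun s _ => Finset.sum_comm)
    _ = (N : ℂ)⁻¹ * ∑ s ∈ Finset.Ico (0 : ℤ) b, ∑ s' ∈ Finset.Ico (0 : ℤ) b,
          (N : ℂ) * ((if s' = s - ρ then 1 else 0 : ℤ) : ℂ) := by
        refine congrArg _ (Finset.sum_congr rfl fun s hs => Finset.sum_congr rfl fun s' hs' => ?_)
        rw [sum_stdAddChar_mul]
        simp only [hvanish s hs s' hs']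
        split_ifs <;> simp
    _ = ((b - |ρ| : ℤ) : ℂ) := by
        simp only [← Finset.mul_sum, ← mul_assoc, inv_mul_cancel₀ hN, one_mul]
        rw [← Int.sum_Ico_sum_Ico_ite_eq_sub b ρ hρ]
        push_cast
        rfl

lemma sum_norm_fejerKernel {b : ℕ} (hb : 2 * b < N) : ∑ t, ‖fejerKernel (N := N) b t‖ = b := by
  have h := synth_fejerKernel (N := N) hb (ρ := 0) (by simp)
  simp only [synth, fejerKernel, Int.cast_zero, zero_mul, AddChar.map_zero_eq_one, mul_one,
    abs_zero, sub_zero] at h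
  have hnorm (t : ZMod N) : ‖fejerKernel b t‖ = (N : ℝ)⁻¹ * normSq (dirichletKernel b t) := by
    rw [fejerKernel, norm_real, Real.norm_of_nonneg (mul_nonneg (by positivity) (normSq_nonneg _))]
  simp only [hnorm]
  exact_mod_cast h

noncomputable def rampKernel (b : ℕ) (t : ZMod N) : ℂ :=
  (stdAddChar (-(b : ZMod N) * t) - 1) / 2 * fejerKernel b t

lemma synth_rampKernel {b : ℕ} (hb : 2 * b < N) {ρ : ℤ} (hρ₀ : 0 ≤ ρ) (hρb : ρ ≤ b) :
    synth (rampKernel b) (ρ : ZMod N) = ρ - b / 2 := by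
  have hsplit : rampKernel (N := N) b
      = fun t => 2⁻¹ * (stdAddChar (-(b : ZMod N) * t) * fejerKernel b t - fejerKernel b t) := by
    funext t
    rw [rampKernel]
    ring
  have hshift : (ρ : ZMod N) + -(b : ZMod N) = ((ρ - b : ℤ) : ZMod N) := by push_cast; ring
  rw [hsplit, synth_const_mul, synth_sub, synth_modulate, hshift,
    synth_fejerKernel hb (abs_le.2 ⟨by omega, by omega⟩),
    synth_fejerKernel hb (abs_le.2 ⟨by omega, by omega⟩),
    abs_of_nonpos (by omega : ρ - b ≤ 0), abs_of_nonneg hρ₀]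
  push_cast
  ring

lemma sum_norm_rampKernel_le {b : ℕ} (hb : 2 * b < N) :
    ∑ t, ‖rampKernel (N := N) b t‖ ≤ b := by
  rw [← sum_norm_fejerKernel hb]
  refine Finset.sum_le_sum fun t _ => ?_
  rw [rampKernel, norm_mul]
  refine mul_le_of_le_one_left (norm_nonneg _) ?_
  rw [norm_div, RCLike.norm_ofNat, div_le_one two_pos]
  exact (norm_sub_le _ _).trans (by rw [AddChar.norm_apply, norm_one]; norm_num)

lemma stdAddChar_intCast_mul (w : ℤ) (t : ZMod N) :
    stdAddChar ((w : ZMod N) * t) = exp (2 * π * I * w * (t.val / N)) := by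
  have : (w : ZMod N) * t = ((w * t.val : ℤ) : ZMod N) := by push_cast [natCast_zmod_val]; rfl
  rw [this, stdAddChar_coe]
  push_cast
  ring_nf

lemma exists_abs_sub_intCast_div_le (f : ℝ) : ∃ m : ℤ, |f - m / N| ≤ 1 / (2 * N) := by
  have hN : (0 : ℝ) < N := Nat.cast_pos.2 (Nat.pos_of_neZero N)
  refine ⟨round (N * f), ?_⟩
  rw [show f - round (N * f) / N = (N * f - round (N * f)) / N by field_simp, abs_div,
    abs_of_pos hN, div_le_div_iff₀ hN (by positivity)]
  nlinarith [abs_sub_round ((N : ℝ) * f)]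

lemma exists_grid_repr_exp {b : ℕ} (hb : 2 * b < N) (f : ℝ) (w₀ : ℤ) :
    ∃ d : ZMod N → ℂ, ∑ t, ‖d t‖ ≤ Real.exp (π * b / N) ∧
      ∀ w : ℤ, w₀ ≤ w → w ≤ w₀ + b →
        exp (2 * π * I * w * f) = ∑ t, d t * exp (2 * π * I * w * (t.val / N)) := by
  obtain ⟨m, hδ⟩ := exists_abs_sub_intCast_div_le (N := N) f
  set δ : ℝ := f - m / N with hδ_def
  set z : ℂ := 2 * π * I * δ
  have hz : ‖z‖ * b ≤ π * b / N := by
    have : ‖z‖ = 2 * π * |δ| := by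
      simp [z, abs_of_pos pi_pos]
    calc ‖z‖ * b = 2 * π * |δ| * b := by rw [this]
      _ ≤ 2 * π * (1 / (2 * N)) * b := by gcongr
      _ = π * b / N := by field_simp
  -- `exp (2πi w f) = C * exp (2πi w m / N) * exp (z (w - w₀ - b / 2))`
  set C : ℂ := exp (2 * π * I * δ * (w₀ + b / 2))
  set q := convExp z (rampKernel (N := N) b)
  set μ : ZMod N := (m : ZMod N)
  refine ⟨fun t => C * (stdAddChar (-(w₀ : ZMod N) * (t - μ)) * q (t - μ)), ?_, ?_⟩
  · have hC : ‖C‖ = 1 := by simp [C, norm_exp]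
    calc ∑ t, ‖C * (stdAddChar (-(w₀ : ZMod N) * (t - μ)) * q (t - μ))‖
        = ∑ t, ‖q (t - μ)‖ := by simp only [norm_mul, hC, AddChar.norm_apply, one_mul]
      _ = ∑ t, ‖q t‖ := Equiv.sum_comp (Equiv.subRight μ) (fun t => ‖q t‖)
      _ ≤ Real.exp (‖z‖ * ∑ t, ‖rampKernel (N := N) b t‖) := sum_norm_convExp_le z _
      _ ≤ Real.exp (π * b / N) := by
        gcongr
        exact (mul_le_mul_of_nonneg_left (sum_norm_rampKernel_le hb) (norm_nonneg z)).trans hz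
  · intro w hw₀ hwb
    have hρ : (w : ZMod N) + -(w₀ : ZMod N) = ((w - w₀ : ℤ) : ZMod N) := by push_cast; ring
    have hμ : stdAddChar ((w : ZMod N) * μ) = exp (2 * π * I * (w * m / N)) := by
      rw [show (w : ZMod N) * μ = ((w * m : ℤ) : ZMod N) by push_cast; rfl, stdAddChar_coe]
      push_cast
      ring_nf
    simp only [← stdAddChar_intCast_mul]
    change _ = synth _ _
    rw [synth_const_mul, synth_translate μ (fun t => stdAddChar (-(w₀ : ZMod N) * t) * q t),
      synth_modulate, hρ, synth_convExp,
      synth_rampKernel hb (by omega) (by omega), hμ, ← Complex.exp_add, ← Complex.exp_add]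
    congr 1
    simp only [z, hδ_def]
    push_cast
    field_simp
    ring

end ZMod

section AtomicNorm

variable {n : Type*} [Fintype n]

lemma atomicNorm_le_sum {ι : Type*} [Fintype ι] {A : Set (n → ℂ)} {y : n → ℂ} {c : ι → ℝ}
    {a : ι → n → ℂ} (hc : ∀ i, 0 ≤ c i) (ha : ∀ i, a i ∈ A) (hy : y = ∑ i, (c i : ℂ) • a i) :
    atomicNorm A y ≤ ∑ i, ENNReal.ofReal (c i) := by
  let e := (Fintype.equivFin ι).symm
  refine sInf_le ⟨_, c ∘ e, a ∘ e, fun j => hc _, fun j => ha _, ?_, ?_⟩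
  · rw [hy]
    exact (e.sum_comp fun i => (c i : ℂ) • a i).symm
  · exact (e.sum_comp fun i => ENNReal.ofReal (c i)).symm

lemma atomicNorm_anti {A B : Set (n → ℂ)} (h : A ⊆ B) (y : n → ℂ) :
    atomicNorm B y ≤ atomicNorm A y :=
  sInf_le_sInf fun _ ⟨k, c, a, hc, ha, hy, ht⟩ => ⟨k, c, a, hc, fun i => h (ha i), hy, ht⟩

lemma atomicNorm_le_ofReal_mul {ι : Type*} [Fintype ι] {A B : Set (n → ℂ)} {C : ℝ} (hC : 0 < C)
    (h : ∀ a ∈ A, ∃ (d : ι → ℝ) (v : ι → n → ℂ), (∀ i, 0 ≤ d i) ∧ (∀ i, v i ∈ B) ∧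
      a = ∑ i, (d i : ℂ) • v i ∧ ∑ i, d i ≤ C) (y : n → ℂ) :
    atomicNorm B y ≤ ENNReal.ofReal C * atomicNorm A y := by
  have hC₀ : ENNReal.ofReal C ≠ 0 := by simpa using hC
  rw [mul_comm, ← ENNReal.div_le_iff hC₀ ENNReal.ofReal_ne_top]
  refine le_sInf ?_
  rintro _ ⟨k, c, a, hc, ha, hy, rfl⟩
  rw [ENNReal.div_le_iff hC₀ ENNReal.ofReal_ne_top, Finset.sum_mul]
  choose d v hd hv hav hdC using fun i => h (a i) (ha i)
  calc atomicNorm B y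
      ≤ ∑ p : Fin k × ι, ENNReal.ofReal (c p.1 * d p.1 p.2) := by
        refine atomicNorm_le_sum (a := fun p => v p.1 p.2)
          (fun p => mul_nonneg (hc p.1) (hd p.1 p.2)) (fun p => hv p.1 p.2) ?_
        simp only [hy, hav, Finset.smul_sum, Fintype.sum_prod_type, smul_smul, ofReal_mul]
    _ = ∑ i, ENNReal.ofReal (c i) * ENNReal.ofReal (∑ j, d i j) := by
        simp only [Fintype.sum_prod_type, ENNReal.ofReal_mul (hc _), ← Finset.mul_sum,
          ENNReal.ofReal_sum_of_nonneg fun j _ => hd _ j]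
    _ ≤ ∑ i, ENNReal.ofReal (c i) * ENNReal.ofReal C := by
        gcongr with i
        exact hdC i

end AtomicNorm

section Sinusoids

variable {n : Type*}

def sinusoidAtoms (Ω : n → ℕ) : Set (n → ℂ) :=
  {a | ∃ f ∈ Set.Ico (0 : ℝ) 1, ∃ φ : ℂ, ‖φ‖ = 1 ∧
    a = fun j => φ * Complex.exp (2 * π * I * (Ω j : ℂ) * (f : ℂ))}

def gridSinusoidAtoms (Ω : n → ℕ) (N : ℕ) : Set (n → ℂ) :=
  {a | ∃ m : Fin N, ∃ φ : ℂ, ‖φ‖ = 1 ∧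
    a = fun j => φ * Complex.exp (2 * π * I * (Ω j : ℂ) * (((m : ℕ) : ℂ) / (N : ℂ)))}

lemma gridSinusoidAtoms_subset (Ω : n → ℕ) (N : ℕ) : gridSinusoidAtoms Ω N ⊆ sinusoidAtoms Ω := by
  rintro a ⟨m, φ, hφ, rfl⟩
  have hN : (0 : ℝ) < N := Nat.cast_pos.2 (Nat.zero_lt_of_lt m.isLt)
  refine ⟨(m : ℝ) / N, ⟨by positivity, (div_lt_one hN).2 (mod_cast m.isLt)⟩, φ, hφ, ?_⟩
  push_cast
  rfl

lemma exists_gridSinusoidAtoms_repr {N b : ℕ} [NeZero N] (hb : 2 * b < N) {Ω : n → ℕ} {w₀ : ℕ}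
    (hΩ : ∀ j, w₀ ≤ Ω j ∧ Ω j ≤ w₀ + b) {a : n → ℂ} (ha : a ∈ sinusoidAtoms Ω) :
    ∃ (d : ZMod N → ℝ) (v : ZMod N → n → ℂ), (∀ t, 0 ≤ d t) ∧
      (∀ t, v t ∈ gridSinusoidAtoms Ω N) ∧ a = ∑ t, (d t : ℂ) • v t ∧
      ∑ t, d t ≤ Real.exp (π * b / N) := by
  obtain ⟨f, -, φ, hφ, rfl⟩ := ha
  obtain ⟨c, hc, hrepr⟩ := ZMod.exists_grid_repr_exp hb f w₀
  let phase (t : ZMod N) : ℂ := exp (arg (φ * c t) * I)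
  refine ⟨fun t => ‖φ * c t‖, fun t j => phase t * exp (2 * π * I * (Ω j : ℂ) * (t.val / N)),
    fun t => norm_nonneg _, fun t => ⟨⟨t.val, t.val_lt⟩, phase t, norm_exp_ofReal_mul_I _, rfl⟩,
    ?_, by simpa [hφ] using hc⟩
  funext j
  have hj := hrepr (Ω j) (mod_cast (hΩ j).1) (mod_cast (hΩ j).2)
  push_cast at hj
  simp only [hj, Finset.mul_sum, Finset.sum_apply, Pi.smul_apply, smul_eq_mul, ← mul_assoc,
    phase, norm_mul_exp_arg_mul_I]

end Sinusoids

lemma ofReal_one_sub_mul_ofReal_exp_le_one {x y : ℝ} (hyx : y ≤ x) :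
    ENNReal.ofReal (1 - x) * ENNReal.ofReal (Real.exp y) ≤ 1 := by
  rw [← ENNReal.ofReal_mul' (Real.exp_pos y).le, ENNReal.ofReal_le_one]
  rcases le_or_gt (1 - x) 0 with hx | hx
  · nlinarith [Real.exp_pos y]
  · calc (1 - x) * Real.exp y ≤ Real.exp (-x) * Real.exp x := by
          gcongr
          linarith [Real.add_one_le_exp (-x)]
      _ = 1 := by rw [← Real.exp_add, neg_add_cancel, Real.exp_zero]

/-- Comparison of the continuous atomic norm `‖·‖_{𝒜(Ω)}` and the grid-based atomic norm
`‖·‖_{𝒜_N(Ω)}` for sampled sinusoids on the index set `Ω` with range `Mbar`: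
`(1 − πMbar/N) ‖z‖_{𝒜_N(Ω)} ≤ ‖z‖_{𝒜(Ω)} ≤ ‖z‖_{𝒜_N(Ω)}` for `N > πMbar`. -/
theorem atomicNorm_grid_comparison (L : ℕ) (hL : 0 < L)
    (Ω : Fin L → ℕ) (hΩ : StrictMono Ω) (Mbar : ℕ)
    (hM : Mbar = Ω ⟨L - 1, Nat.sub_lt hL Nat.one_pos⟩ + 1 - Ω ⟨0, hL⟩)
    (N : ℕ) (hN : Real.pi * (Mbar : ℝ) < (N : ℝ)) (z : Fin L → ℂ) :
    ENNReal.ofReal (1 - Real.pi * (Mbar : ℝ) / (N : ℝ)) *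
      atomicNorm {a : Fin L → ℂ | ∃ m : Fin N, ∃ φ : ℂ, ‖φ‖ = 1 ∧
        a = fun j => φ * Complex.exp (2 * π * I * (Ω j : ℂ) * (((m : ℕ) : ℂ) / (N : ℂ)))} z
      ≤ atomicNorm {a : Fin L → ℂ | ∃ f ∈ Set.Ico (0 : ℝ) 1, ∃ φ : ℂ, ‖φ‖ = 1 ∧
        a = fun j => φ * Complex.exp (2 * π * I * (Ω j : ℂ) * (f : ℂ))} z
    ∧
    atomicNorm {a : Fin L → ℂ | ∃ f ∈ Set.Ico (0 : ℝ) 1, ∃ φ : ℂ, ‖φ‖ = 1 ∧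
        a = fun j => φ * Complex.exp (2 * π * I * (Ω j : ℂ) * (f : ℂ))} z
      ≤ atomicNorm {a : Fin L → ℂ | ∃ m : Fin N, ∃ φ : ℂ, ‖φ‖ = 1 ∧
        a = fun j => φ * Complex.exp (2 * π * I * (Ω j : ℂ) * (((m : ℕ) : ℂ) / (N : ℂ)))} z := by
  have hrange : ∀ j, Ω ⟨0, hL⟩ ≤ Ω j ∧ Ω j ≤ Ω ⟨0, hL⟩ + (Mbar - 1) := fun j =>
    have := hΩ.monotone (show j ≤ ⟨L - 1, Nat.sub_lt hL Nat.one_pos⟩ by simp [Fin.le_def]; omega)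
    ⟨hΩ.monotone (by simp [Fin.le_def]), by omega⟩
  have hb : 2 * (Mbar - 1) < N := by
    have : (2 * (Mbar - 1) : ℕ) ≤ π * Mbar := by
      have := Real.pi_gt_three
      have : ((Mbar - 1 : ℕ) : ℝ) ≤ Mbar := mod_cast Nat.sub_le Mbar 1
      push_cast
      nlinarith
    exact_mod_cast this.trans_lt hN
  have : NeZero N := ⟨by omega⟩
  refine ⟨?_, atomicNorm_anti (gridSinusoidAtoms_subset Ω N) z⟩
  have hcompare := atomicNorm_le_ofReal_mul (Real.exp_pos _)
    (fun a ha => exists_gridSinusoidAtoms_repr hb hrange ha) z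
  calc _ ≤ ENNReal.ofReal (1 - π * Mbar / N) * (ENNReal.ofReal (Real.exp (π * (Mbar - 1 : ℕ) / N))
          * atomicNorm (sinusoidAtoms Ω) z) := by gcongr; exact hcompare
    _ ≤ 1 * atomicNorm (sinusoidAtoms Ω) z := by
        rw [← mul_assoc]
        gcongr
        refine ofReal_one_sub_mul_ofReal_exp_le_one ?_
        gcongr
        exact_mod_cast Nat.sub_le Mbar 1
    _ = _ := one_mul _
end
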